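/- Let n ≥ 1, 0 ≤ k ≤ n and r ≥ 2(n−k) be integers. For a k-subset J of {1,…,n} with complement J′, let σ(J) ∈ {±1} be the sign of the permutation (j₁,…,j_k, j′₁,…,j′_{n−k}) of (1,…,n), where J and J′ are listed in increasing order. Define the bilinear pairing B(u, v) = Σ_{|J|=k} σ(J) ∫_{[0,1]ⁿ} u_J · v_{J′} between polynomial k-forms u = (u_J) of degree ≤ r with vanishing trace on ∂Iⁿ and polynomial (n−k)-forms v = (v_K) of degree ≤ r − 2(n−k). Then B is a perfect pairing: if u ∈ P_rΛ^k_0(Iⁿ) satisfies B(u, v) = 0 for all v ∈ P_{r−2(n−k)}Λ^{n−k}, then u = 0, and if v ∈ P_{r−2(n−k)}Λ^{n−k} satisfies B(u, v) = 0 for all u ∈ P_rΛ^k_0(Iⁿ), then v = 0. -/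

import Mathlib

open MvPolynomial

/-- A (polynomial) `k`-form on `ℝⁿ`: a family of polynomials indexed by the `k`-element
subsets `J` of the variables, representing `Σ_J u_J dx_J`. -/
abbrev kForm (n k : ℕ) : Type :=
  {J : Finset (Fin n) // J.card = k} → MvPolynomial (Fin n) ℝ

/-- Substitution of the single variable `x_i := c` (other variables untouched). -/
noncomputable def substAt {n : ℕ} (i : Fin n) (c : ℝ) :
    MvPolynomial (Fin n) ℝ →ₐ[ℝ] MvPolynomial (Fin n) ℝ :=
  MvPolynomial.bind₁ (fun j : Fin n => if j = i then MvPolynomial.C c else MvPolynomial.X j)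

/-- `P_rΛ^k`: polynomial `k`-forms all of whose components have total degree `≤ r`. -/
noncomputable def PLambda (n k r : ℕ) : Submodule ℝ (kForm n k) :=
  ⨅ J : {J : Finset (Fin n) // J.card = k},
    Submodule.comap (LinearMap.proj J) (MvPolynomial.restrictTotalDegree (Fin n) ℝ r)

/-- `P_rΛ^k_0(Iⁿ)`: polynomial `k`-forms of total degree `≤ r` with vanishing trace on the
boundary of the unit cube `[0,1]ⁿ`: for every variable `i`, every `c ∈ {0,1}` and every
index set `J` with `i ∉ J`, substituting `x_i := c` into `u_J` gives `0`. -/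
noncomputable def PLambda0 (n k r : ℕ) : Submodule ℝ (kForm n k) :=
  PLambda n k r ⊓
    ⨅ (i : Fin n), ⨅ c ∈ ({0, 1} : Set ℝ),
      ⨅ (J : {J : Finset (Fin n) // J.card = k}), ⨅ (_ : i ∉ J.1),
        LinearMap.ker ((substAt i c).toLinearMap ∘ₗ LinearMap.proj J)

/-- The exterior derivative on polynomial `k`-forms:
`(du)_K = Σ_{i∈K} (−1)^{#{j∈K : j<i}} ∂u_{K∖{i}}/∂x_i`. -/
noncomputable def polyFormExtDeriv (n k : ℕ) : kForm n k →ₗ[ℝ] kForm n (k + 1) :=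
  LinearMap.pi fun K =>
    ∑ i ∈ K.1.attach,
      ((-1 : ℝ) ^ (K.1.filter (fun j => j < i.1)).card) •
        ((MvPolynomial.pderiv (R := ℝ) i.1).toLinearMap ∘ₗ
          (LinearMap.proj ⟨K.1.erase i.1, by
            simp [Finset.card_erase_of_mem i.2, K.2]⟩))

/-- The sign `σ(J)` of the shuffle permutation of `Fin n` listing first the elements of `J`
in increasing order and then the elements of the complement `J′ = Jᶜ` in increasing order. -/
noncomputable def shuffleSign {n : ℕ} (J : Finset (Fin n)) : ℤ :=
  (Equiv.Perm.sign
    ((finCongr (show n = J.card + (n - J.card) by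
        have := Finset.card_le_univ J; simp at this; omega)).trans <|
      (finSumFinEquiv (m := J.card) (n := n - J.card)).symm.trans <|
      (Equiv.sumCongr (J.orderIsoOfFin rfl).toEquiv
        ((Jᶜ.orderIsoOfFin (by simp [Finset.card_compl])).toEquiv.trans
          (Equiv.subtypeEquivRight (fun x => Finset.mem_compl)))).trans <|
      Equiv.sumCompl (· ∈ J)) : ℤˣ)

open MeasureTheory in
/-- The integrated wedge product `B(u, v) = Σ_{|J|=k} σ(J) ∫_{[0,1]ⁿ} u_J · v_{J′}` of a
`k`-form `u` and an `(n−k)`-form `v`, `J′` being the complement of `J`. -/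
noncomputable def wedgeIntPairing (n k : ℕ) (u : kForm n k) (v : kForm n (n - k)) : ℝ :=
  ∑ J : {J : Finset (Fin n) // J.card = k},
    (shuffleSign J.1 : ℝ) *
      ∫ x in Set.Icc (0 : Fin n → ℝ) 1,
        MvPolynomial.eval x (u J * v ⟨(J.1)ᶜ, by simp [Finset.card_compl, J.2]⟩)

/-! ### Auxiliary lemmas -/

lemma substAt_X_self {n : ℕ} (i : Fin n) (c : ℝ) : substAt i c (X i) = C c := by
  simp [substAt]

lemma substAt_X_ne {n : ℕ} {i j : Fin n} (c : ℝ) (h : j ≠ i) : substAt i c (X j) = X j := by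
  simp [substAt, h]

lemma dvd_sub_substAt {n : ℕ} (i : Fin n) (c : ℝ) (p : MvPolynomial (Fin n) ℝ) :
    (X i - C c) ∣ p - substAt i c p := by
  induction p using MvPolynomial.induction_on with
  | C a => simp [substAt]
  | add p q hp hq =>
    have : p + q - substAt i c (p + q) = (p - substAt i c p) + (q - substAt i c q) := by
      rw [map_add]; ring
    rw [this]; exact dvd_add hp hq
  | mul_X p j hp =>
    rw [map_mul]
    by_cases hj : j = i
    · subst hj
      rw [substAt_X_self]
      have : p * X j - substAt j c p * C c
          = (p - substAt j c p) * X j + substAt j c p * (X j - C c) := by ring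
      rw [this]
      exact dvd_add (dvd_mul_of_dvd_left hp _) (.mul_left dvd_rfl _)
    · rw [substAt_X_ne c hj]
      have : p * X j - substAt i c p * X j = (p - substAt i c p) * X j := by ring
      rw [this]
      exact dvd_mul_of_dvd_left hp _

lemma X_mul_X_sub_one_ne_zero {n : ℕ} (i : Fin n) :
    (X i * (X i - 1) : MvPolynomial (Fin n) ℝ) ≠ 0 := by
  apply mul_ne_zero (X_ne_zero i)
  intro h
  have := congrArg constantCoeff h
  simp at this

lemma factor_lemma {n : ℕ} (S : Finset (Fin n)) :
    ∀ p : MvPolynomial (Fin n) ℝ,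
    (∀ i ∈ S, ∀ c ∈ ({0, 1} : Set ℝ), substAt i c p = 0) →
    ∃ q, p = (∏ i ∈ S, X i * (X i - 1)) * q := by
  induction S using Finset.induction with
  | empty => intro p _; exact ⟨p, by simp⟩
  | @insert a S ha IH =>
    intro p h
    have h0 : substAt a 0 p = 0 := h a (by simp) 0 (by simp)
    have h1 : substAt a 1 p = 0 := h a (by simp) 1 (by simp)
    obtain ⟨q1, hq1⟩ : X a ∣ p := by
      have := dvd_sub_substAt a 0 p
      rw [h0, sub_zero, map_zero, sub_zero] at this
      exact this
    have h1' : substAt a 1 q1 = 0 := by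
      rw [hq1, map_mul, substAt_X_self] at h1
      simpa using h1
    obtain ⟨q2, hq2⟩ : (X a - 1) ∣ q1 := by
      have := dvd_sub_substAt a 1 q1
      rw [h1', sub_zero] at this
      simpa using this
    have hp2 : p = X a * (X a - 1) * q2 := by rw [hq1, hq2, mul_assoc]
    have hS : ∀ i ∈ S, ∀ c ∈ ({0, 1} : Set ℝ), substAt i c q2 = 0 := by
      intro i hi c hc
      have hia : a ≠ i := fun e => ha (e ▸ hi)
      have := h i (Finset.mem_insert_of_mem hi) c hc
      rw [hp2, map_mul, map_mul, substAt_X_ne c hia, map_sub, substAt_X_ne c hia,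
        map_one] at this
      rcases mul_eq_zero.1 this with h' | h'
      · exact absurd h' (X_mul_X_sub_one_ne_zero a)
      · exact h'
    obtain ⟨q, hq⟩ := IH q2 hS
    refine ⟨q, ?_⟩
    rw [hp2, hq, Finset.prod_insert ha]
    ring

lemma sum_add_single {n : ℕ} (m : Fin n →₀ ℕ) (i : Fin n) :
    ((m + Finsupp.single i 1).sum fun _ e => e) = (m.sum fun _ e => e) + 1 := by
  rw [Finsupp.sum_add_index' (fun _ => rfl) (fun _ _ _ => rfl)]
  simp

lemma step_deg {n : ℕ} (i : Fin n) (q : MvPolynomial (Fin n) ℝ) (hq : q ≠ 0) :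
    q.totalDegree + 2 ≤ ((X i * (X i - 1)) * q).totalDegree := by
  obtain ⟨m, hm, hdeg⟩ := Finset.exists_mem_eq_sup q.support (support_nonempty.2 hq)
    (fun m : Fin n →₀ ℕ => m.sum fun _ e => e)
  have hcoeff : coeff m q ≠ 0 := mem_support_iff.1 hm
  set m' : Fin n →₀ ℕ := m + Finsupp.single i 1 + Finsupp.single i 1 with hm'
  have hrw : (X i * (X i - 1)) * q = (q * X i) * X i - q * X i := by ring
  have hdeg' : q.totalDegree = m.sum fun _ e => e := hdeg
  have hhigh : coeff (m + Finsupp.single i 1) q = 0 := by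
    apply coeff_eq_zero_of_totalDegree_lt
    show q.totalDegree < (m + Finsupp.single i 1).sum fun _ e => e
    rw [sum_add_single]
    omega
  have hc : coeff m' ((X i * (X i - 1)) * q) = coeff m q := by
    rw [hrw, coeff_sub, coeff_mul_X, coeff_mul_X, coeff_mul_X, hhigh, sub_zero]
  have hmem : m' ∈ ((X i * (X i - 1)) * q).support := mem_support_iff.2 (hc ▸ hcoeff)
  have h2 := le_totalDegree hmem
  rw [hm', sum_add_single, sum_add_single] at h2
  omega

lemma prod_deg {n : ℕ} (S : Finset (Fin n)) (q : MvPolynomial (Fin n) ℝ) (hq : q ≠ 0) :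
    q.totalDegree + 2 * S.card ≤ ((∏ i ∈ S, X i * (X i - 1)) * q).totalDegree := by
  classical
  induction S using Finset.induction with
  | empty => simp
  | @insert a S ha IH =>
    have hW : (∏ i ∈ S, (X i * (X i - 1)) : MvPolynomial (Fin n) ℝ) ≠ 0 :=
      Finset.prod_ne_zero_iff.2 (fun i _ => X_mul_X_sub_one_ne_zero i)
    have hq' : (∏ i ∈ S, X i * (X i - 1)) * q ≠ 0 := mul_ne_zero hW hq
    have := step_deg a ((∏ i ∈ S, X i * (X i - 1)) * q) hq'
    rw [Finset.prod_insert ha, mul_assoc]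
    rw [Finset.card_insert_of_notMem ha]
    omega

lemma deg_X_mul_X_sub_one {n : ℕ} (i : Fin n) :
    (X i * (X i - 1) : MvPolynomial (Fin n) ℝ).totalDegree ≤ 2 := by
  refine le_trans (totalDegree_mul _ _) ?_
  have h1 : (X i - 1 : MvPolynomial (Fin n) ℝ).totalDegree ≤ 1 := by
    rw [sub_eq_add_neg]
    refine le_trans (totalDegree_add _ _) ?_
    simp [totalDegree_neg, totalDegree_X]
  simp only [totalDegree_X]
  omega

lemma deg_W {n : ℕ} (S : Finset (Fin n)) :
    (∏ i ∈ S, X i * (X i - 1) : MvPolynomial (Fin n) ℝ).totalDegree ≤ 2 * S.card := by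
  refine le_trans (totalDegree_finset_prod _ _) ?_
  calc ∑ i ∈ S, (X i * (X i - 1) : MvPolynomial (Fin n) ℝ).totalDegree
      ≤ ∑ _i ∈ S, 2 := Finset.sum_le_sum (fun i _ => deg_X_mul_X_sub_one i)
    _ = 2 * S.card := by rw [Finset.sum_const]; ring

lemma zero_of_eval_zero_cube : ∀ {n : ℕ} (p : MvPolynomial (Fin n) ℝ),
    (∀ x : Fin n → ℝ, (∀ i, x i ∈ Set.Ioo (0 : ℝ) 1) → eval x p = 0) → p = 0
  | 0, p, h => by
    rw [eq_C_of_isEmpty p] at h ⊢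
    have := h (fun i => i.elim0) (fun i => i.elim0)
    rw [eval_C] at this
    rw [this, map_zero]
  | n + 1, p, h => by
    have key : ∀ m, (finSuccEquiv ℝ n p).coeff m = 0 := by
      intro m
      apply zero_of_eval_zero_cube
      intro y hy
      have hpol : Polynomial.map (eval y) (finSuccEquiv ℝ n p) = 0 := by
        apply Polynomial.eq_zero_of_infinite_isRoot
        apply Set.Infinite.mono (s := Set.Ioo (0:ℝ) 1)
        · intro t ht
          show Polynomial.IsRoot _ t
          rw [Polynomial.IsRoot, ← eval_eq_eval_mv_eval']
          apply h
          intro i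
          refine Fin.cases ?_ ?_ i
          · simpa using ht
          · intro j; simpa using hy j
        · exact Set.Ioo_infinite (by norm_num)
      have := congrArg (fun q => Polynomial.coeff q m) hpol
      simpa [Polynomial.coeff_map] using this
    have hP : finSuccEquiv ℝ n p = 0 := Polynomial.ext (fun m => by simp [key m])
    have := congrArg (finSuccEquiv ℝ n).symm hP
    simpa using this

open MeasureTheory in
lemma integral_zero_imp {n : ℕ} (S : Finset (Fin n)) (q : MvPolynomial (Fin n) ℝ)
    (h : ∫ x in Set.Icc (0 : Fin n → ℝ) 1,
        eval x ((∏ i ∈ S, X i * (X i - 1)) * q * q) = 0) :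
    q = 0 := by
  by_contra hq
  set W : MvPolynomial (Fin n) ℝ := (∏ i ∈ S, X i * (X i - 1)) with hW
  set g : (Fin n → ℝ) → ℝ := fun x => (-1 : ℝ) ^ S.card * eval x (W * q * q) with hg
  have hcont : Continuous g := continuous_const.mul (MvPolynomial.continuous_eval _)
  have hgval : ∀ x, g x = (∏ i ∈ S, x i * (1 - x i)) * (eval x q) ^ 2 := by
    intro x
    rw [hg]
    simp only [map_mul, hW, map_prod, map_sub, eval_X, map_one]
    have hpr : (∏ i ∈ S, x i * (1 - x i)) = (∏ _i ∈ S, (-1:ℝ)) * ∏ i ∈ S, x i * (x i - 1) := by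
      rw [← Finset.prod_mul_distrib]
      exact Finset.prod_congr rfl (fun i _ => by ring)
    rw [hpr, Finset.prod_const]
    ring
  have hnonneg : ∀ x ∈ Set.Icc (0 : Fin n → ℝ) 1, 0 ≤ g x := by
    intro x hx
    rw [hgval]
    apply mul_nonneg
    · apply Finset.prod_nonneg
      intro i _
      have h0 : (0:ℝ) ≤ x i := hx.1 i
      have h1 : x i ≤ 1 := hx.2 i
      nlinarith
    · positivity
  have hint : ∫ x in Set.Icc (0 : Fin n → ℝ) 1, g x = 0 := by
    rw [hg]
    rw [MeasureTheory.integral_const_mul]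
    rw [h, mul_zero]
  obtain ⟨x0, hx0⟩ : ∃ x0 : Fin n → ℝ, (∀ i, x0 i ∈ Set.Ioo (0:ℝ) 1) ∧ eval x0 q ≠ 0 := by
    by_contra hcon
    push_neg at hcon
    exact hq (zero_of_eval_zero_cube q hcon)
  have hgx0 : g x0 ≠ 0 := by
    rw [hgval]
    apply mul_ne_zero
    · apply Finset.prod_ne_zero_iff.2
      intro i _
      have h0 : 0 < x0 i := (hx0.1 i).1
      have h1 : x0 i < 1 := (hx0.1 i).2
      nlinarith
    · exact pow_ne_zero _ hx0.2
  set cube : Set (Fin n → ℝ) := Set.univ.pi fun _ => Set.Ioo (0:ℝ) 1 with hcube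
  have hopen : IsOpen (Function.support g ∩ cube) := by
    apply IsOpen.inter
    · exact isOpen_ne_fun hcont continuous_const
    · exact isOpen_set_pi Set.finite_univ (fun i _ => isOpen_Ioo)
  have hne : (Function.support g ∩ cube).Nonempty :=
    ⟨x0, hgx0, fun i _ => hx0.1 i⟩
  have hsub : cube ⊆ Set.Icc (0 : Fin n → ℝ) 1 := by
    intro x hx
    constructor <;> intro i
    · exact (hx i (Set.mem_univ i)).1.le
    · exact (hx i (Set.mem_univ i)).2.le
  have hpos : 0 < volume (Function.support g ∩ Set.Icc (0 : Fin n → ℝ) 1) := by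
    refine lt_of_lt_of_le (hopen.measure_pos volume hne) (measure_mono ?_)
    exact Set.inter_subset_inter_right _ hsub
  have hinteg : IntegrableOn g (Set.Icc (0 : Fin n → ℝ) 1) volume :=
    hcont.integrableOn_Icc
  have hae : 0 ≤ᵐ[volume.restrict (Set.Icc (0 : Fin n → ℝ) 1)] g :=
    ae_restrict_of_forall_mem measurableSet_Icc hnonneg
  have := (setIntegral_pos_iff_support_of_nonneg_ae hae hinteg).2 hpos
  rw [hint] at this
  exact lt_irrefl 0 this

lemma mem_PLambda_iff {n k r : ℕ} (u : kForm n k) :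
    u ∈ PLambda n k r ↔ ∀ J, (u J).totalDegree ≤ r := by
  simp [PLambda, Submodule.mem_iInf, Submodule.mem_comap, mem_restrictTotalDegree]

lemma mem_PLambda0_iff {n k r : ℕ} (u : kForm n k) :
    u ∈ PLambda0 n k r ↔ (∀ J, (u J).totalDegree ≤ r) ∧
      ∀ (i : Fin n), ∀ c ∈ ({0, 1} : Set ℝ),
        ∀ J : {J : Finset (Fin n) // J.card = k}, i ∉ J.1 → substAt i c (u J) = 0 := by
  simp [PLambda0, Submodule.mem_inf, mem_PLambda_iff, Submodule.mem_iInf, LinearMap.mem_ker]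

lemma shuffleSign_ne_zero {n : ℕ} (J : Finset (Fin n)) : (shuffleSign J : ℝ) ≠ 0 := by
  unfold shuffleSign
  rw [Int.cast_ne_zero]
  exact Units.ne_zero _

/-- For `n ≥ 1`, `0 ≤ k ≤ n`, `r ≥ 2(n−k)`, the integrated wedge product is
a perfect pairing between `P_rΛ^k_0(Iⁿ)` and `P_{r−2(n−k)}Λ^{n−k}(Iⁿ)`. -/
theorem stmt7 (n k r : ℕ) (hn : 1 ≤ n) (hk : k ≤ n) (hr : 2 * (n - k) ≤ r) :
    (∀ u ∈ PLambda0 n k r,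
      (∀ v ∈ PLambda n (n - k) (r - 2 * (n - k)), wedgeIntPairing n k u v = 0) → u = 0) ∧
    (∀ v ∈ PLambda n (n - k) (r - 2 * (n - k)),
      (∀ u ∈ PLambda0 n k r, wedgeIntPairing n k u v = 0) → v = 0) := by
  classical
  constructor
  · -- first direction
    intro u hu hB
    rw [mem_PLambda0_iff] at hu
    obtain ⟨hdeg, htrace⟩ := hu
    funext J
    show u J = 0
    have hJc : (J.1ᶜ).card = n - k := by simp [Finset.card_compl, J.2]
    obtain ⟨q, hq⟩ := factor_lemma J.1ᶜ (u J)
      (fun i hi c hc => htrace i c hc J (Finset.mem_compl.1 hi))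
    have hdq : q.totalDegree ≤ r - 2 * (n - k) := by
      by_cases hq0 : q = 0
      · simp [hq0]
      · have h1 := prod_deg J.1ᶜ q hq0
        rw [← hq, hJc] at h1
        have h2 := hdeg J
        omega
    set Kc : {K : Finset (Fin n) // K.card = n - k} := ⟨J.1ᶜ, hJc⟩ with hKc
    set v : kForm n (n - k) := fun K => if K = Kc then q else 0 with hv
    have hvmem : v ∈ PLambda n (n - k) (r - 2 * (n - k)) := by
      rw [mem_PLambda_iff]
      intro K
      rw [hv]
      dsimp only
      split
      · exact hdq
      · simp
    have hzero : ∀ J' : {J : Finset (Fin n) // J.card = k}, J' ≠ J →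
        (shuffleSign J'.1 : ℝ) * ∫ x in Set.Icc (0 : Fin n → ℝ) 1,
          MvPolynomial.eval x (u J' * v ⟨(J'.1)ᶜ, by simp [Finset.card_compl, J'.2]⟩) = 0 := by
      intro J' hJ'
      have hvz : v ⟨(J'.1)ᶜ, by simp [Finset.card_compl, J'.2]⟩ = 0 := by
        rw [hv]
        dsimp only
        rw [if_neg]
        intro hEq
        apply hJ'
        apply Subtype.ext
        have := congrArg Subtype.val hEq
        exact compl_injective this
      simp [hvz]
    have hBv := hB v hvmem
    rw [wedgeIntPairing, Fintype.sum_eq_single J hzero] at hBv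
    have hvKc : v ⟨(J.1)ᶜ, by simp [Finset.card_compl, J.2]⟩ = q := by
      rw [hv]
      dsimp only
      rw [if_pos (Subtype.ext rfl)]
    rw [hvKc] at hBv
    rcases mul_eq_zero.1 hBv with h' | h'
    · exact absurd h' (shuffleSign_ne_zero _)
    · simp only [hq] at h'
      have hq0 := integral_zero_imp J.1ᶜ q h'
      rw [hq, hq0, mul_zero]
  · -- second direction
    intro v hv hB
    rw [mem_PLambda_iff] at hv
    funext K
    show v K = 0
    have hKc : (K.1ᶜ).card = k := by
      rw [Finset.card_compl, K.2]
      simp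
      omega
    set J0 : {J : Finset (Fin n) // J.card = k} := ⟨K.1ᶜ, hKc⟩ with hJ0
    set W : MvPolynomial (Fin n) ℝ := ∏ i ∈ K.1, X i * (X i - 1) with hW
    set u : kForm n k := fun J => if J = J0 then W * v K else 0 with hu
    have humem : u ∈ PLambda0 n k r := by
      rw [mem_PLambda0_iff]
      constructor
      · intro J
        rw [hu]
        dsimp only
        split
        · refine le_trans (totalDegree_mul _ _) ?_
          have h1 := deg_W K.1
          rw [← hW, K.2] at h1
          have h2 := hv K
          omega
        · simp
      · intro i c hc J hiJ
        rw [hu]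
        dsimp only
        split
        · rename_i hJ
          rw [hJ] at hiJ
          have h' : i ∉ K.1ᶜ := hiJ
          have hiK : i ∈ K.1 := by simpa using h'
          have hfac : substAt i c (X i * (X i - 1)) = 0 := by
            rw [map_mul, map_sub, substAt_X_self, map_one]
            simp only [Set.mem_insert_iff, Set.mem_singleton_iff] at hc
            rcases hc with rfl | rfl <;> simp
          have hWz : substAt i c W = 0 := by
            rw [hW, ← Finset.mul_prod_erase _ _ hiK, map_mul, hfac, zero_mul]
          rw [map_mul, hWz, zero_mul]
        · simp
    have hzero : ∀ J' : {J : Finset (Fin n) // J.card = k}, J' ≠ J0 →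
        (shuffleSign J'.1 : ℝ) * ∫ x in Set.Icc (0 : Fin n → ℝ) 1,
          MvPolynomial.eval x (u J' * v ⟨(J'.1)ᶜ, by simp [Finset.card_compl, J'.2]⟩) = 0 := by
      intro J' hJ'
      have huz : u J' = 0 := by
        rw [hu]
        dsimp only
        rw [if_neg hJ']
      simp [huz]
    have hBu := hB u humem
    rw [wedgeIntPairing, Fintype.sum_eq_single J0 hzero] at hBu
    have huJ0 : u J0 = W * v K := by
      rw [hu]
      dsimp only
      rw [if_pos rfl]
    have hvJ0c : v ⟨(J0.1)ᶜ, by simp [Finset.card_compl, J0.2]⟩ = v K := by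
      congr 1
      apply Subtype.ext
      show (K.1ᶜ)ᶜ = K.1
      simp
    rw [huJ0, hvJ0c] at hBu
    rcases mul_eq_zero.1 hBu with h' | h'
    · exact absurd h' (shuffleSign_ne_zero _)
    · simp only [hW] at h'
      exact integral_zero_imp K.1 (v K) h'
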